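/- Fix s ≠ 0 and w ∈ ℝ. Suppose points A, B, C, D ∈ ℝ⁴ lie on the parabola {(x, x, y, 0) : 2sx + y² = w} (coordinates ordered (t,x,y,z)) and points E, F, G, H lie on the parabola {(x+s, x, 0, z) : 2sx - z² + s² = w}. Then for every P ∈ {A,B,C,D} and Q ∈ {E,F,G,H}, the Minkowski interval η(P-Q,P-Q) = 0. -/
import Mathlib

/-- The Minkowski bilinear form on ℝ⁴, coordinates ordered (t, x, y, z). -/
def minkowski (a b : Fin 4 → ℝ) : ℝ :=
  -(a 0 * b 0) + a 1 * b 1 + a 2 * b 2 + a 3 * b 3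

/-- Membership in the parabola 2sx + y² = w lying in the null plane t = x, z = 0. -/
def onParabola1 (s w : ℝ) (P : Fin 4 → ℝ) : Prop :=
  P 0 = P 1 ∧ P 3 = 0 ∧ 2 * s * P 1 + (P 2) ^ 2 = w

/-- Membership in the parabola 2sx - z² + s² = w lying in the null plane t = x + s, y = 0. -/
def onParabola2 (s w : ℝ) (Q : Fin 4 → ℝ) : Prop :=
  Q 0 = Q 1 + s ∧ Q 2 = 0 ∧ 2 * s * Q 1 - (Q 3) ^ 2 + s ^ 2 = w

lemma key (s w : ℝ) (P Q : Fin 4 → ℝ) (hP : onParabola1 s w P) (hQ : onParabola2 s w Q) :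
    minkowski (P - Q) (P - Q) = 0 := by
  obtain ⟨h1, h2, h3⟩ := hP
  obtain ⟨h4, h5, h6⟩ := hQ
  simp only [minkowski, Pi.sub_apply, h1, h2, h4, h5]
  nlinarith [h3, h6]

theorem stmt_6 (s w : ℝ) (hs : s ≠ 0) (A B C D E F G H : Fin 4 → ℝ)
    (hA : onParabola1 s w A) (hB : onParabola1 s w B)
    (hC : onParabola1 s w C) (hD : onParabola1 s w D)
    (hE : onParabola2 s w E) (hF : onParabola2 s w F)
    (hG : onParabola2 s w G) (hH : onParabola2 s w H) :
    ∀ P ∈ ({A, B, C, D} : Set (Fin 4 → ℝ)), ∀ Q ∈ ({E, F, G, H} : Set (Fin 4 → ℝ)),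
      minkowski (P - Q) (P - Q) = 0 := by
  intro P hP Q hQ
  have hP' : onParabola1 s w P := by
    rcases hP with h | h | h | h <;> subst h <;> assumption
  have hQ' : onParabola2 s w Q := by
    rcases hQ with h | h | h | h <;> subst h <;> assumption
  exact key s w P Q hP' hQ'
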